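/- Let T be a locally finite tree, A and B finitely supported antisymmetric ℤ-valued functions on oriented edges of T with values of all path-sums in {-1,0,1}, and τ a finite subtree containing the supports of both A and B. Then the following are equivalent: (1) there exist bi-infinite proper edge paths c, c' in T with c·A = 1 = c·B and c'·A = 1 = -c'·B; (2) there exist finite edge paths ξ, ξ' in τ with endpoints on ∂τ such that ξ·A = 1 = ξ·B and ξ'·A = 1 = -ξ'·B, provided T has no terminal vertices. -/

import Mathlib

/-- A bi-infinite proper edge path in a graph. -/
def IsProperBiInfPath {V : Type*} (G : SimpleGraph V) (c : ℤ → V) : Prop :=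
  (∀ n : ℤ, G.Adj (c n) (c (n + 1))) ∧
    ∀ S : Finset V, ∃ N : ℕ, ∀ n : ℤ, (N : ℤ) ≤ |n| → c n ∉ S

/-!
On a tree an antisymmetric edge function `A` is a coboundary, `A (u, v) = F v - F u`, so every
path sum telescopes to the difference of `F` at the endpoints. Since `A` vanishes off `τ`, `F` is
constant along walks that stay outside `τ` until their last step. Hence the sum along a proper
bi-infinite path equals `F y - F x` for two boundary vertices `x`, `y` of `τ`, which a path
inside `τ` joins. Conversely, a path in `τ` between boundary vertices is extended at both ends by
rays leaving `τ`: minimal degree `2` gives non-backtracking continuations, these are geodesics in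
a tree, and a geodesic between two vertices of the connected set `τ` stays in `τ`, so the rays
never come back.
-/

theorem finsum_sub_eq_of_forall_notMem_Ico {M : Type*} [AddCommGroup M] (f : ℤ → M) {a b : ℤ}
    (hab : a ≤ b) (h : ∀ n ∉ Finset.Ico a b, f (n + 1) - f n = 0) :
    ∑ᶠ n, (f (n + 1) - f n) = f b - f a := by
  rw [finsum_eq_sum_of_support_subset _ (s := Finset.Ico a b)
    fun n hn => by_contra (hn <| h n ·)]
  clear h
  induction b, hab using Int.leInduction with
  | base => simp
  | succ b hab ih =>
    rw [Finset.Ico_add_one_right_eq_Icc, ← Finset.Ico_insert_right hab,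
      Finset.sum_insert Finset.right_notMem_Ico, ih]
    abel

namespace SimpleGraph

variable {V M : Type*} [AddCommGroup M] {G : SimpleGraph V}

theorem IsTree.exists_potential (hT : G.IsTree) (A : V × V → M)
    (hA : ∀ u v, A (u, v) = -A (v, u)) :
    ∃ F : V → M, ∀ u v, G.Adj u v → A (u, v) = F v - F u := by
  classical
  obtain ⟨v₀⟩ := hT.connected.nonempty
  let P : ∀ v, G.Path v₀ v := fun v => (hT.connected v₀ v).some.toPath
  refine ⟨fun v => ((P v).1.darts.map fun d => A d.toProd).sum, fun u w h => ?_⟩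
  dsimp only
  -- of the paths to the two ends of an edge, one is the other extended by that edge
  by_cases hw : w ∈ (P u).1.support
  · rw [hT.isAcyclic.path_concat (P w).2 (P u).2 h.symm hw]
    simp [Walk.darts_concat, hA w u]
  · rw [hT.isAcyclic.path_concat (P u).2 (P w).2 h
      (hT.isAcyclic.mem_support_of_ne_mem_support_of_adj_of_isPath (P w).2 (P u).2 h.symm hw)]
    simp [Walk.darts_concat]

theorem eq_of_walk_of_forall_darts_fst_notMem {A : V × V → M} {F : V → M} {τ : Finset V}
    (hF : ∀ u v, G.Adj u v → A (u, v) = F v - F u)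
    (hsupp : ∀ u v, A (u, v) ≠ 0 → u ∈ τ ∧ v ∈ τ) {u v : V} (p : G.Walk u v)
    (hp : ∀ d ∈ p.darts, d.fst ∉ τ) : F u = F v := by
  induction p with
  | nil => rfl
  | cons h p ih =>
    simp only [Walk.darts_cons, List.mem_cons, forall_eq_or_imp] at hp
    rw [← ih hp.2, eq_comm, ← sub_eq_zero, ← hF _ _ h]
    exact by_contra fun hA => hp.1 (hsupp _ _ hA).1

theorem sum_range_eq_sub_of_adj {A : V × V → M} {F : V → M}
    (hF : ∀ u v, G.Adj u v → A (u, v) = F v - F u) {m : ℕ} {ξ : ℕ → V}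
    (hξ : ∀ i < m, G.Adj (ξ i) (ξ (i + 1))) :
    ∑ i ∈ Finset.range m, A (ξ i, ξ (i + 1)) = F (ξ m) - F (ξ 0) := by
  refine (Finset.sum_range_sub (F ∘ ξ) m).symm ▸ ?_
  exact Finset.sum_congr rfl fun i hi => hF _ _ (hξ i (Finset.mem_range.1 hi))

theorem finsum_eq_sub_of_forall_notMem {A : V × V → M} {F : V → M} {τ : Finset V}
    (hF : ∀ u v, G.Adj u v → A (u, v) = F v - F u)
    (hsupp : ∀ u v, A (u, v) ≠ 0 → u ∈ τ ∧ v ∈ τ) {c : ℤ → V}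
    (hc : ∀ n, G.Adj (c n) (c (n + 1))) {a b : ℤ} (hab : a ≤ b)
    (hout : ∀ n, (n < a ∨ b < n) → c n ∉ τ) :
    ∑ᶠ n, A (c n, c (n + 1)) = F (c b) - F (c a) := by
  simp only [hF _ _ (hc _)]
  refine finsum_sub_eq_of_forall_notMem_Ico (F ∘ c) hab fun n hn => ?_
  rw [Finset.mem_Ico, not_and_or, not_le, not_lt] at hn
  rw [Function.comp_apply, Function.comp_apply, ← hF _ _ (hc n)]
  refine by_contra fun hA => ?_
  rcases hn with hn | hn
  · exact hout n (.inl hn) (hsupp _ _ hA).1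
  · exact hout (n + 1) (.inr (by omega)) (hsupp _ _ hA).2

def innerBoundary (G : SimpleGraph V) (τ : Finset V) : Set V :=
  {x | x ∈ τ ∧ ∃ w, w ∉ τ ∧ G.Adj x w}

theorem Walk.exists_walk_to_innerBoundary {τ : Finset V} {u t : V} (p : G.Walk u t)
    (ht : t ∈ τ) (hu : u ∉ τ) :
    ∃ x ∈ G.innerBoundary τ, ∃ q : G.Walk u x, ∀ d ∈ q.darts, d.fst ∉ τ := by
  induction p with
  | nil => exact absurd ht hu
  | @cons u x t h p ih =>
    by_cases hx : x ∈ τ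
    · exact ⟨x, ⟨hx, u, hu, h.symm⟩, .cons h .nil, by simpa using hu⟩
    · obtain ⟨y, hy, q, hq⟩ := ih ht hx
      exact ⟨y, hy, .cons h q, by simpa [hu] using hq⟩

theorem Connected.exists_seq_of_induce {τ : Finset V} (hτ : (G.induce (τ : Set V)).Connected)
    {x y : V} (hx : x ∈ τ) (hy : y ∈ τ) :
    ∃ (m : ℕ) (ξ : ℕ → V), ξ 0 = x ∧ ξ m = y ∧ (∀ i ≤ m, ξ i ∈ τ) ∧
      ∀ i < m, G.Adj (ξ i) (ξ (i + 1)) := by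
  obtain ⟨P⟩ := hτ.preconnected ⟨x, hx⟩ ⟨y, hy⟩
  let Q := P.map (Embedding.induce (τ : Set V)).toHom
  refine ⟨Q.length, Q.getVert, Q.getVert_zero, Q.getVert_length, fun i _ => ?_,
    fun i hi => Q.adj_getVert_succ hi⟩
  rw [Walk.getVert_map]
  exact (P.getVert i).2

theorem IsTree.support_subset_of_induce_connected (hT : G.IsTree) {τ : Finset V}
    (hτ : (G.induce (τ : Set V)).Connected) {u v : V} {p : G.Walk u v} (hp : p.IsPath)
    (hu : u ∈ τ) (hv : v ∈ τ) : ∀ x ∈ p.support, x ∈ τ := by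
  classical
  obtain ⟨P⟩ := hτ.preconnected ⟨u, hu⟩ ⟨v, hv⟩
  have hQ := P.toPath.2.map (f := (Embedding.induce (τ : Set V)).toHom)
    (Embedding.induce (G := G) _).injective
  obtain rfl : p = _ := congrArg Subtype.val <|
    (hT.isAcyclic.subsingleton_path u v).elim ⟨p, hp⟩ ⟨_, hQ⟩
  intro x hx
  obtain ⟨y, -, rfl⟩ := List.mem_map.1 ((Walk.support_map _ _) ▸ hx)
  exact y.2

theorem exists_nonbacktracking_seq [∀ v, Fintype (G.neighborSet v)]
    (hdeg : ∀ v, 2 ≤ G.degree v) {u w : V} (h : G.Adj u w) :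
    ∃ r : ℕ → V, r 0 = u ∧ r 1 = w ∧ (∀ k, G.Adj (r k) (r (k + 1))) ∧ ∀ k, r (k + 2) ≠ r k := by
  have hnext (x a : V) : ∃ y, G.Adj x y ∧ y ≠ a := by
    obtain ⟨y, hy, hya⟩ := (G.neighborFinset x).exists_mem_ne
      ((G.card_neighborFinset_eq_degree x).symm ▸ hdeg x) a
    exact ⟨y, (G.mem_neighborFinset x y).1 hy, hya⟩
  choose next hadj hne using hnext
  let s : ℕ → V × V := fun k => Nat.rec (u, w) (fun _ p => (p.2, next p.2 p.1)) k
  have hs : ∀ k, G.Adj (s k).1 (s k).2 := by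
    intro k
    induction k with
    | zero => exact h
    | succ k _ => exact hadj _ _
  exact ⟨fun k => (s k).1, rfl, rfl, hs, fun k => hne _ _⟩

def seqWalk (r : ℕ → V) (hr : ∀ k, G.Adj (r k) (r (k + 1))) : (k : ℕ) → G.Walk (r 0) (r k)
  | 0 => .nil
  | k + 1 => (seqWalk r hr k).concat (hr k)

section seqWalk

variable {r : ℕ → V} {hr : ∀ k, G.Adj (r k) (r (k + 1))}

@[simp]
theorem length_seqWalk (k : ℕ) : (seqWalk r hr k).length = k := by
  induction k with
  | zero => rfl
  | succ k ih => simp [seqWalk, ih]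

theorem mem_support_seqWalk {j k : ℕ} (hjk : j ≤ k) : r j ∈ (seqWalk r hr k).support := by
  induction k with
  | zero => simp [Nat.le_zero.1 hjk, seqWalk]
  | succ k ih =>
    rw [seqWalk, Walk.support_concat, List.mem_append, List.mem_singleton]
    rcases hjk.lt_or_eq with hjk | rfl
    · exact .inl (ih (by omega))
    · exact .inr rfl

theorem IsAcyclic.isPath_seqWalk (hG : G.IsAcyclic) (hnb : ∀ k, r (k + 2) ≠ r k) :
    ∀ k, (seqWalk r hr k).IsPath
  | 0 => .nil
  | k + 1 => by
    have hp := hG.isPath_seqWalk hnb k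
    refine hp.concat (fun hmem => ?_) (hr k)
    have hpen := hG.eq_penultimate_of_adj_end hp (hr k) hmem
    cases k with
    | zero => exact (hr 0).ne' hpen
    | succ j => exact hnb j (by simpa [seqWalk] using hpen)

end seqWalk

theorem IsAcyclic.length_eq_dist (hG : G.IsAcyclic) {u v : V} {p : G.Walk u v} (hp : p.IsPath) :
    p.length = G.dist u v := by
  obtain ⟨q, hq, hlen⟩ := Reachable.exists_path_of_dist ⟨p⟩
  obtain rfl : p = q :=
    congrArg Subtype.val <| (hG.subsingleton_path u v).elim ⟨p, hp⟩ ⟨q, hq⟩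
  exact hlen

theorem IsTree.exists_ray_outside [∀ v, Fintype (G.neighborSet v)] (hT : G.IsTree)
    (hdeg : ∀ v, 2 ≤ G.degree v) {τ : Finset V} (hτ : (G.induce (τ : Set V)).Connected)
    {u w : V} (hu : u ∈ τ) (hw : w ∉ τ) (h : G.Adj u w) :
    ∃ r : ℕ → V, r 0 = u ∧ (∀ k, G.Adj (r k) (r (k + 1))) ∧ (∀ k, G.dist u (r k) = k) ∧
      ∀ k, 0 < k → r k ∉ τ := by
  obtain ⟨r, rfl, rfl, hr, hnb⟩ := exists_nonbacktracking_seq hdeg h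
  have hpath := hT.isAcyclic.isPath_seqWalk (hr := hr) hnb
  refine ⟨r, rfl, hr, fun k => ?_, fun k hk hkτ => hw ?_⟩
  · rw [← hT.isAcyclic.length_eq_dist (hpath k), length_seqWalk]
  · exact hT.support_subset_of_induce_connected hτ (hpath k) hu hkτ _ (mem_support_seqWalk hk)

theorem isProperBiInfPath_of_abs_le_dist_add {c : ℤ → V} (hc : ∀ n, G.Adj (c n) (c (n + 1)))
    (v : V) (K : ℕ) (h : ∀ n, |n| ≤ G.dist v (c n) + K) : IsProperBiInfPath G c := by
  refine ⟨hc, fun S => ⟨S.sup (G.dist v) + K + 1, fun n hn hS => ?_⟩⟩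
  have := Finset.le_sup (f := G.dist v) hS
  have := h n
  push_cast at hn
  omega

def glueRays (a ξ : ℕ → V) (m : ℕ) (b : ℕ → V) (n : ℤ) : V :=
  if n < 0 then a (-n).toNat else if n ≤ m then ξ n.toNat else b (n - m).toNat

section glueRays

variable {a ξ b : ℕ → V} {m : ℕ}

theorem adj_glueRays (ha : ∀ k, G.Adj (a k) (a (k + 1))) (hξ : ∀ i < m, G.Adj (ξ i) (ξ (i + 1)))
    (hb : ∀ k, G.Adj (b k) (b (k + 1))) (ha0 : a 0 = ξ 0) (hb0 : b 0 = ξ m) (n : ℤ) :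
    G.Adj (glueRays a ξ m b n) (glueRays a ξ m b (n + 1)) := by
  have hstep {f : ℕ → V} (hf : ∀ k, G.Adj (f k) (f (k + 1))) {i j : ℕ}
      (hij : j = i + 1 ∨ i = j + 1) : G.Adj (f i) (f j) := by
    rcases hij with rfl | rfl
    exacts [hf i, (hf j).symm]
  simp only [glueRays]
  split_ifs
  all_goals first
    | omega
    | exact hstep ha (by omega)
    | exact hstep hb (by omega)
    | skip
  -- left: the junction at `-1`, the segment `ξ`, and the junction at `m`
  · obtain rfl : n = -1 := by omega
    simpa [← ha0] using (ha 0).symm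
  · rw [show (n + 1).toNat = n.toNat + 1 by omega]
    exact hξ _ (by omega)
  · obtain rfl : n = m := by omega
    simpa [← hb0] using hb 0

theorem Connected.isProperBiInfPath_glueRays (hG : G.Connected)
    (hadj : ∀ n, G.Adj (glueRays a ξ m b n) (glueRays a ξ m b (n + 1)))
    (hda : ∀ k, G.dist (ξ 0) (a k) = k) (hdb : ∀ k, G.dist (ξ m) (b k) = k) :
    IsProperBiInfPath G (glueRays a ξ m b) := by
  refine isProperBiInfPath_of_abs_le_dist_add hadj (ξ 0) (m + G.dist (ξ 0) (ξ m)) fun n => ?_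
  simp only [glueRays]
  split_ifs with hneg hle
  · rw [hda, abs_of_neg hneg]
    omega
  · rw [abs_of_nonneg (by omega)]
    omega
  · have := hG.dist_triangle (u := ξ m) (v := ξ 0) (w := b (n - m).toNat)
    rw [hdb, dist_comm] at this
    rw [abs_of_nonneg (by omega)]
    omega

end glueRays

theorem IsTree.exists_isProperBiInfPath_extending [∀ v, Fintype (G.neighborSet v)]
    (hT : G.IsTree) (hdeg : ∀ v, 2 ≤ G.degree v) {τ : Finset V}
    (hτ : (G.induce (τ : Set V)).Connected) {m : ℕ} {ξ : ℕ → V}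
    (hξτ : ∀ i ≤ m, ξ i ∈ τ) (hξ : ∀ i < m, G.Adj (ξ i) (ξ (i + 1)))
    (h₀ : ∃ w, w ∉ τ ∧ G.Adj (ξ 0) w) (h₁ : ∃ w, w ∉ τ ∧ G.Adj (ξ m) w) :
    ∃ c : ℤ → V, IsProperBiInfPath G c ∧ c 0 = ξ 0 ∧ c m = ξ m ∧
      ∀ n, (n < 0 ∨ (m : ℤ) < n) → c n ∉ τ := by
  obtain ⟨w₀, hw₀, h₀⟩ := h₀
  obtain ⟨w₁, hw₁, h₁⟩ := h₁
  obtain ⟨a, ha0, ha, hda, hoa⟩ := hT.exists_ray_outside hdeg hτ (hξτ 0 m.zero_le) hw₀ h₀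
  obtain ⟨b, hb0, hb, hdb, hob⟩ := hT.exists_ray_outside hdeg hτ (hξτ m le_rfl) hw₁ h₁
  refine ⟨glueRays a ξ m b,
    hT.connected.isProperBiInfPath_glueRays (adj_glueRays ha hξ hb ha0 hb0) hda hdb,
    by simp [glueRays], by simp [glueRays], fun n hn => ?_⟩
  simp only [glueRays]
  split_ifs
  · exact hoa _ (by omega)
  · omega
  · exact hob _ (by omega)

theorem IsTree.exists_isProperBiInfPath_iff [∀ v, Fintype (G.neighborSet v)] (hT : G.IsTree)
    (hdeg : ∀ v, 2 ≤ G.degree v) {τ : Finset V} (hτ : (G.induce (τ : Set V)).Connected)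
    {A B : V × V → M} {FA FB : V → M}
    (hFA : ∀ u v, G.Adj u v → A (u, v) = FA v - FA u)
    (hFB : ∀ u v, G.Adj u v → B (u, v) = FB v - FB u)
    (hsuppA : ∀ u v, A (u, v) ≠ 0 → u ∈ τ ∧ v ∈ τ)
    (hsuppB : ∀ u v, B (u, v) ≠ 0 → u ∈ τ ∧ v ∈ τ) (s t : M) :
    (∃ c : ℤ → V, IsProperBiInfPath G c ∧
        ∑ᶠ n, A (c n, c (n + 1)) = s ∧ ∑ᶠ n, B (c n, c (n + 1)) = t) ↔
    ∃ (m : ℕ) (ξ : ℕ → V),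
        (∀ i ≤ m, ξ i ∈ τ) ∧ (∀ i < m, G.Adj (ξ i) (ξ (i + 1))) ∧
        (∃ w, w ∉ τ ∧ G.Adj (ξ 0) w) ∧ (∃ w, w ∉ τ ∧ G.Adj (ξ m) w) ∧
        ∑ i ∈ Finset.range m, A (ξ i, ξ (i + 1)) = s ∧
        ∑ i ∈ Finset.range m, B (ξ i, ξ (i + 1)) = t := by
  constructor
  · rintro ⟨c, hc, hA, hB⟩
    obtain ⟨N, hN⟩ := hc.2 τ
    have hout : ∀ n : ℤ, (n ≤ -N ∨ N ≤ n) → c n ∉ τ :=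
      fun n hn => hN n (le_abs.2 (by omega))
    obtain ⟨⟨t₀, ht₀⟩⟩ := hτ.nonempty
    obtain ⟨x, hx, p, hp⟩ :=
      (hT.connected (c (-N : ℤ)) t₀).some.exists_walk_to_innerBoundary ht₀ (hout _ (by omega))
    obtain ⟨y, hy, q, hq⟩ :=
      (hT.connected (c N) t₀).some.exists_walk_to_innerBoundary ht₀ (hout _ (by omega))
    obtain ⟨m, ξ, rfl, rfl, hξτ, hξ⟩ := hτ.exists_seq_of_induce hx.1 hy.1
    have hsum {E : V × V → M} {F : V → M} (hF : ∀ u v, G.Adj u v → E (u, v) = F v - F u)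
        (hsupp : ∀ u v, E (u, v) ≠ 0 → u ∈ τ ∧ v ∈ τ) :
        ∑ i ∈ Finset.range m, E (ξ i, ξ (i + 1)) = ∑ᶠ n, E (c n, c (n + 1)) := by
      rw [sum_range_eq_sub_of_adj hF hξ, finsum_eq_sub_of_forall_notMem hF hsupp hc.1
        (show (-N : ℤ) ≤ N by omega) fun n hn => hout n (by omega),
        eq_of_walk_of_forall_darts_fst_notMem hF hsupp p hp,
        eq_of_walk_of_forall_darts_fst_notMem hF hsupp q hq]
    exact ⟨m, ξ, hξτ, hξ, hx.2, hy.2, hsum hFA hsuppA ▸ hA, hsum hFB hsuppB ▸ hB⟩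
  · rintro ⟨m, ξ, hξτ, hξ, h₀, h₁, hA, hB⟩
    obtain ⟨c, hc, hc0, hcm, hout⟩ :=
      hT.exists_isProperBiInfPath_extending hdeg hτ hξτ hξ h₀ h₁
    have hsum {E : V × V → M} {F : V → M} (hF : ∀ u v, G.Adj u v → E (u, v) = F v - F u)
        (hsupp : ∀ u v, E (u, v) ≠ 0 → u ∈ τ ∧ v ∈ τ) :
        ∑ᶠ n, E (c n, c (n + 1)) = ∑ i ∈ Finset.range m, E (ξ i, ξ (i + 1)) := by
      rw [finsum_eq_sub_of_forall_notMem hF hsupp hc.1 m.cast_nonneg hout, hc0, hcm,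
        sum_range_eq_sub_of_adj hF hξ]
    exact ⟨c, hc, hsum hFA hsuppA ▸ hA, hsum hFB hsuppB ▸ hB⟩

end SimpleGraph

/-- Finiteness reduction for the disjointness criterion: there exist bi-infinite
proper paths `c`, `c'` with `c·A = 1 = c·B` and `c'·A = 1 = -c'·B` iff there
exist finite edge paths `ξ`, `ξ'` in `τ` with endpoints on the boundary of `τ`
with the same intersection numbers. -/
theorem disjointness_criterion_finite_check {V : Type*} (G : SimpleGraph V)
    (hT : G.IsTree) [∀ v : V, Fintype (G.neighborSet v)]
    (hdeg : ∀ v : V, 2 ≤ G.degree v)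
    (A B : V × V → ℤ)
    (hantiA : ∀ u v : V, A (u, v) = -A (v, u))
    (hantiB : ∀ u v : V, B (u, v) = -B (v, u))
    (hvalA : ∀ c : ℤ → V, IsProperBiInfPath G c →
      (∑ᶠ n : ℤ, A (c n, c (n + 1))) ∈ ({-1, 0, 1} : Set ℤ))
    (hvalB : ∀ c : ℤ → V, IsProperBiInfPath G c →
      (∑ᶠ n : ℤ, B (c n, c (n + 1))) ∈ ({-1, 0, 1} : Set ℤ))
    (τ : Finset V) (hτconn : (G.induce (τ : Set V)).Connected)
    (hsuppA : ∀ u v : V, A (u, v) ≠ 0 → G.Adj u v ∧ u ∈ τ ∧ v ∈ τ)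
    (hsuppB : ∀ u v : V, B (u, v) ≠ 0 → G.Adj u v ∧ u ∈ τ ∧ v ∈ τ) :
    ((∃ c : ℤ → V, IsProperBiInfPath G c ∧
        (∑ᶠ n : ℤ, A (c n, c (n + 1))) = 1 ∧ (∑ᶠ n : ℤ, B (c n, c (n + 1))) = 1) ∧
      (∃ c' : ℤ → V, IsProperBiInfPath G c' ∧
        (∑ᶠ n : ℤ, A (c' n, c' (n + 1))) = 1 ∧
          (∑ᶠ n : ℤ, B (c' n, c' (n + 1))) = -1)) ↔
    ((∃ (m : ℕ) (ξ : ℕ → V),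
        (∀ i ≤ m, ξ i ∈ τ) ∧ (∀ i < m, G.Adj (ξ i) (ξ (i + 1))) ∧
        (∃ w, w ∉ τ ∧ G.Adj (ξ 0) w) ∧ (∃ w, w ∉ τ ∧ G.Adj (ξ m) w) ∧
        (∑ i ∈ Finset.range m, A (ξ i, ξ (i + 1))) = 1 ∧
        (∑ i ∈ Finset.range m, B (ξ i, ξ (i + 1))) = 1) ∧
      (∃ (m' : ℕ) (ξ' : ℕ → V),
        (∀ i ≤ m', ξ' i ∈ τ) ∧ (∀ i < m', G.Adj (ξ' i) (ξ' (i + 1))) ∧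
        (∃ w, w ∉ τ ∧ G.Adj (ξ' 0) w) ∧ (∃ w, w ∉ τ ∧ G.Adj (ξ' m') w) ∧
        (∑ i ∈ Finset.range m', A (ξ' i, ξ' (i + 1))) = 1 ∧
        (∑ i ∈ Finset.range m', B (ξ' i, ξ' (i + 1))) = -1)) := by
  obtain ⟨FA, hFA⟩ := hT.exists_potential A hantiA
  obtain ⟨FB, hFB⟩ := hT.exists_potential B hantiB
  have key := hT.exists_isProperBiInfPath_iff hdeg hτconn hFA hFB
    (fun u v h => (hsuppA u v h).2) (fun u v h => (hsuppB u v h).2)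
  exact and_congr (key 1 1) (key 1 (-1))
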